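/- Let L be a Lie ring and a, a_1,…,a_n ∈ L. Then [a,[a_1,…,a_n]] = ∑_{i=0}^{n-1} ∑_{(α,β)∈Sh¹(n−i,i)} (−1)^i · [a, a_{β(i)},…,a_{β(1)}, a_{α(1)},…,a_{α(n−i)}], where the inner brackets on the right-hand side are left-normed. -/

import Mathlib

/-- The left-normed Lie bracket `[a₁,…,aₘ]` of a list of elements of a Lie ring,
defined by `[a₁] = a₁` and `[a₁,…,aₘ] = [[a₁,…,a_{m-1}], aₘ]` (and `0` for the empty list). -/
def lieWord {L : Type*} [LieRing L] : List L → L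
  | [] => 0
  | x :: xs => xs.foldl (fun a b => ⁅a, b⁆) x

/-- An `(s,t)`-shuffle `(α,β)` with `α(1) = 1`: a pair of strictly increasing maps
`α : {1,…,s} → {1,…,s+t}`, `β : {1,…,t} → {1,…,s+t}` with disjoint images and `α(1) = 1`
(everything 0-indexed, so the last condition reads `α 0 = 0`).  This is the set `Sh¹(s,t)`. -/
structure Shuffle1 (s t : ℕ) where
  α : Fin s → Fin (s + t)
  β : Fin t → Fin (s + t)
  mono_alpha : StrictMono α
  mono_beta : StrictMono β
  disj : ∀ i j, α i ≠ β j
  first : ∀ hs : 0 < s, α ⟨0, hs⟩ = ⟨0, Nat.lt_of_lt_of_le hs (Nat.le_add_right s t)⟩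

/-!
Both sides obey the same recursion in the last letter `c = aₙ`. On the left, the Leibniz rule
gives `[a, [w, c]] = [[a, w], c] - [[a, c], w]`. On the right, the top position of a shuffle lies
either in `α`, so that `c` is the last letter of the word, or in `β`, so that `c` is the letter
right after `a` and merges with it into `[a, c]`, at the cost of one sign. To run this recursion,
a shuffle in `Sh¹(s, t)` is encoded by the set of positions `2, …, s + t` occupied by `β`: the maps
being strictly increasing, this set determines the shuffle, and every `t`-subset arises.
-/

open Finset

lemma Fin.sum_finset_succ {M : Type*} [AddCommMonoid M] {m : ℕ} (f : Finset (Fin (m + 1)) → M) :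
    ∑ B, f B = ∑ B : Finset (Fin m),
      (f (B.image Fin.castSucc) + f (insert (Fin.last m) (B.image Fin.castSucc))) := by
  rw [← powerset_univ, Fin.univ_castSuccEmb, cons_eq_insert, map_eq_image, Fin.coe_castSuccEmb,
    sum_powerset_insert (by simp), powerset_image, ← sum_add_distrib,
    sum_image fun _ _ _ _ h => image_injective (Fin.castSucc_injective m) h, powerset_univ]

section LieWord

variable {L : Type*} [LieRing L]

lemma lieWord_cons_cons (x y : L) (l : List L) :
    lieWord (x :: y :: l) = lieWord (⁅x, y⁆ :: l) := rfl

lemma lieWord_cons_append_singleton (x : L) (l : List L) (y : L) :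
    lieWord (x :: (l ++ [y])) = ⁅lieWord (x :: l), y⁆ := by
  simp [lieWord, List.foldl_append]

def shuffleWord {m : ℕ} (a b₀ : L) (b : Fin m → L) (B : Finset (Fin m)) : L :=
  lieWord (a :: ((((List.finRange m).filter (· ∈ B)).map b).reverse ++
    b₀ :: ((List.finRange m).filter (· ∉ B)).map b))

lemma shuffleWord_image_castSucc {m : ℕ} (a b₀ : L) (b : Fin (m + 1) → L) (B : Finset (Fin m)) :
    shuffleWord a b₀ b (B.image Fin.castSucc) =
      ⁅shuffleWord a b₀ (fun i => b i.castSucc) B, b (Fin.last m)⁆ := by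
  simp [shuffleWord, List.finRange_succ_last, List.filter_map, Function.comp_def,
    ← lieWord_cons_append_singleton]

lemma shuffleWord_insert_last_image_castSucc {m : ℕ} (a b₀ : L) (b : Fin (m + 1) → L)
    (B : Finset (Fin m)) :
    shuffleWord a b₀ b (insert (Fin.last m) (B.image Fin.castSucc)) =
      shuffleWord ⁅a, b (Fin.last m)⁆ b₀ (fun i => b i.castSucc) B := by
  simp [shuffleWord, List.finRange_succ_last, List.filter_map, Function.comp_def,
    Fin.castSucc_ne_last, lieWord_cons_cons]

theorem lie_lieWord_cons_ofFn_eq_sum_shuffleWord {m : ℕ} (a b₀ : L) (b : Fin m → L) :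
    ⁅a, lieWord (b₀ :: List.ofFn b)⁆ = ∑ B, ((-1 : ℤ) ^ #B) • shuffleWord a b₀ b B := by
  induction m generalizing a with
  | zero => simp [shuffleWord, lieWord, Subsingleton.elim (default : Finset (Fin 0)) ∅]
  | succ m ih =>
    rw [List.ofFn_succ', List.concat_eq_append, lieWord_cons_append_singleton, leibniz_lie,
      ← lie_skew _ ⁅a, b (Fin.last m)⁆, ih, ih, Fin.sum_finset_succ]
    simp [shuffleWord_image_castSucc, shuffleWord_insert_last_image_castSucc,
      card_image_of_injective _ (Fin.castSucc_injective m), pow_succ, sum_lie,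
      sum_add_distrib, smul_lie]

end LieWord

theorem List.ofFn_eq_filter_finRange_of_strictMono {k N : ℕ} {f : Fin k → Fin N}
    (hf : StrictMono f) (p : Fin N → Bool) (hp : ∀ x, p x ↔ ∃ i, f i = x) :
    List.ofFn f = (List.finRange N).filter p :=
  (List.pairwise_ofFn.2 hf).eq_of_mem_iff ((List.pairwise_lt_finRange N).filter p)
    (by simp [List.mem_ofFn, hp])

namespace Shuffle1

variable {s t m : ℕ}

theorem ext {sh sh' : Shuffle1 s t} (hα : sh.α = sh'.α) (hβ : sh.β = sh'.β) : sh = sh' := by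
  cases sh; cases sh'; cases hα; cases hβ; rfl

theorem sumElim_bijective (sh : Shuffle1 s t) : Function.Bijective (Sum.elim sh.α sh.β) := by
  refine (Fintype.bijective_iff_injective_and_card _).2 ⟨?_, by simp⟩
  rintro (i | i) (j | j) h
  · exact congrArg Sum.inl (sh.mono_alpha.injective h)
  · exact absurd h (sh.disj i j)
  · exact absurd h.symm (sh.disj j i)
  · exact congrArg Sum.inr (sh.mono_beta.injective h)

theorem exists_alpha_eq_iff (sh : Shuffle1 s t) (x : Fin (s + t)) :
    (∃ i, sh.α i = x) ↔ ¬ ∃ j, sh.β j = x := by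
  constructor
  · rintro ⟨i, rfl⟩ ⟨j, hj⟩
    exact sh.disj i j hj.symm
  · intro hx
    obtain ⟨i | j, hi⟩ := sh.sumElim_bijective.2 x
    · exact ⟨i, hi⟩
    · exact absurd ⟨j, hi⟩ hx

theorem val_beta_ne_zero (sh : Shuffle1 s t) (hs : 0 < s) (j : Fin t) : (sh.β j : ℕ) ≠ 0 := by
  intro h0
  exact sh.disj ⟨0, hs⟩ j (by rw [sh.first hs]; ext; exact h0.symm)

def betaPositions (h : s + t = m + 1) (sh : Shuffle1 s t) : Finset (Fin m) :=
  {j | ∃ k, Fin.cast h (sh.β k) = j.succ}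

theorem mem_image_succ_betaPositions (hs : 0 < s) (h : s + t = m + 1) (sh : Shuffle1 s t)
    (x : Fin (m + 1)) :
    x ∈ (sh.betaPositions h).image Fin.succ ↔ ∃ k, Fin.cast h (sh.β k) = x := by
  cases x using Fin.cases with
  | zero =>
    simp only [mem_image, Fin.succ_ne_zero, and_false, exists_false, false_iff, not_exists]
    exact fun k hk => sh.val_beta_ne_zero hs k (by simpa using congrArg Fin.val hk)
  | succ j => simp [betaPositions]

theorem card_betaPositions (hs : 0 < s) (h : s + t = m + 1) (sh : Shuffle1 s t) :
    #(sh.betaPositions h) = t := by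
  have himage : (sh.betaPositions h).image Fin.succ = univ.image fun k => Fin.cast h (sh.β k) := by
    ext x
    simp [mem_image_succ_betaPositions hs]
  rw [← card_image_of_injective _ (Fin.succ_injective _), himage,
    card_image_of_injective (f := fun k => Fin.cast h (sh.β k)) _
      ((Fin.cast_injective h).comp sh.mono_beta.injective), card_univ,
    Fintype.card_fin]

theorem betaPositions_injective (hs : 0 < s) (h : s + t = m + 1) :
    Function.Injective (betaPositions (s := s) (t := t) h) := by
  intro sh sh' hB
  have hβ (y : Fin (s + t)) : (∃ k, sh.β k = y) ↔ ∃ k, sh'.β k = y := by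
    have key := mem_image_succ_betaPositions hs h sh (Fin.cast h y)
    rw [hB, mem_image_succ_betaPositions hs h sh'] at key
    simpa [Fin.cast_inj] using key.symm
  refine ext ((sh.mono_alpha.range_inj sh'.mono_alpha).1 (Set.ext fun y => ?_))
    ((sh.mono_beta.range_inj sh'.mono_beta).1 (Set.ext hβ))
  simp only [Set.mem_range, exists_alpha_eq_iff, hβ]

theorem card_compl_image_succ {B : Finset (Fin m)} (h : s + t = m + 1) (hB : #B = t) :
    #(B.image Fin.succ)ᶜ = s := by
  rw [card_compl, card_image_of_injective _ (Fin.succ_injective _), Fintype.card_fin]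
  omega

def ofFinset (h : s + t = m + 1) (B : Finset (Fin m)) (hB : #B = t) : Shuffle1 s t where
  α := (Fin.castOrderIso h).symm ∘ (B.image Fin.succ)ᶜ.orderEmbOfFin (card_compl_image_succ h hB)
  β := (Fin.castOrderIso h).symm ∘
    (B.image Fin.succ).orderEmbOfFin (by rw [card_image_of_injective _ (Fin.succ_injective _), hB])
  mono_alpha := (Fin.castOrderIso h).symm.strictMono.comp (OrderEmbedding.strictMono _)
  mono_beta := (Fin.castOrderIso h).symm.strictMono.comp (OrderEmbedding.strictMono _)
  disj i j hij := by
    have := (Fin.castOrderIso h).symm.injective hij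
    have hi := orderEmbOfFin_mem (B.image Fin.succ)ᶜ (card_compl_image_succ h hB) i
    rw [this, mem_compl] at hi
    exact hi (orderEmbOfFin_mem _ _ j)
  first hs := by
    rw [Function.comp_apply, orderEmbOfFin_zero _ hs,
      (min'_eq_iff _ _ 0).2 ⟨by simp [Fin.succ_ne_zero], fun y _ => Fin.zero_le y⟩]
    rfl

theorem betaPositions_ofFinset (h : s + t = m + 1) (B : Finset (Fin m)) (hB : #B = t) :
    (ofFinset h B hB).betaPositions h = B := by
  ext j
  simp [betaPositions, ofFinset, ← Set.mem_range]

theorem finsum_comp_betaPositions {M : Type*} [AddCommMonoid M] (hs : 0 < s)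
    (h : s + t = m + 1) (f : Finset (Fin m) → M) :
    ∑ᶠ sh : Shuffle1 s t, f (sh.betaPositions h) = ∑ B ∈ powersetCard t univ, f B := by
  rw [← sum_coe_sort, ← finsum_eq_sum_of_fintype]
  refine finsum_eq_of_bijective (fun sh => ⟨sh.betaPositions h,
    mem_powersetCard.2 ⟨subset_univ _, sh.card_betaPositions hs h⟩⟩) ⟨?_, ?_⟩ fun _ => rfl
  · exact fun sh sh' hB => betaPositions_injective hs h (congrArg Subtype.val hB)
  · rintro ⟨B, hB⟩
    exact ⟨ofFinset h B (mem_powersetCard.1 hB).2,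
      Subtype.ext (betaPositions_ofFinset h B (mem_powersetCard.1 hB).2)⟩

theorem lieWord_eq_shuffleWord {L : Type*} [LieRing L] (hs : 0 < s) (h : s + t = m + 1)
    (sh : Shuffle1 s t) (a : L) (b : Fin (m + 1) → L) :
    lieWord (a :: ((List.ofFn fun j => b (Fin.cast h (sh.β j))).reverse ++
      List.ofFn fun j => b (Fin.cast h (sh.α j)))) =
      shuffleWord a (b 0) (fun j => b j.succ) (sh.betaPositions h) := by
  have hβ : List.ofFn (fun j => Fin.cast h (sh.β j)) =
      (List.finRange (m + 1)).filter (· ∈ (sh.betaPositions h).image Fin.succ) :=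
    List.ofFn_eq_filter_finRange_of_strictMono ((Fin.castOrderIso h).strictMono.comp sh.mono_beta)
      _ fun x => by simpa using mem_image_succ_betaPositions hs h sh x
  have hα : List.ofFn (fun j => Fin.cast h (sh.α j)) =
      (List.finRange (m + 1)).filter (· ∉ (sh.betaPositions h).image Fin.succ) := by
    refine List.ofFn_eq_filter_finRange_of_strictMono
      ((Fin.castOrderIso h).strictMono.comp sh.mono_alpha) _ fun x => ?_
    obtain ⟨y, rfl⟩ : ∃ y, Fin.cast h y = x := ⟨Fin.cast h.symm x, by simp⟩
    simpa [mem_image_succ_betaPositions hs, Fin.cast_inj] using (sh.exists_alpha_eq_iff y).symm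
  rw [← Function.comp_def b, ← Function.comp_def b, ← List.map_ofFn, ← List.map_ofFn, hβ, hα]
  simp [shuffleWord, List.finRange_succ, List.filter_map, Function.comp_def]

end Shuffle1

/-- For elements `a, a₁,…,aₙ` of a Lie ring,
`[a,[a₁,…,aₙ]] = ∑_{i=0}^{n-1} ∑_{(α,β) ∈ Sh¹(n−i,i)} (−1)^i · [a, a_{β(i)},…,a_{β(1)}, a_{α(1)},…,a_{α(n−i)}]`,
where the brackets on the right-hand side are left-normed. -/
theorem lie_leftBracket_eq_sum_shuffles {L : Type*} [LieRing L] (n : ℕ) (hn : 1 ≤ n)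
    (a : L) (b : Fin n → L) :
    ⁅a, lieWord (List.ofFn b)⁆ =
      ∑ i : Fin n, ∑ᶠ sh : Shuffle1 (n - (i : ℕ)) (i : ℕ),
        ((-1 : ℤ) ^ (i : ℕ)) •
          lieWord (a ::
            ((List.ofFn fun j => b (Fin.cast (Nat.sub_add_cancel i.isLt.le) (sh.β j))).reverse
              ++ List.ofFn fun j => b (Fin.cast (Nat.sub_add_cancel i.isLt.le) (sh.α j)))) := by
  obtain ⟨m, rfl⟩ := Nat.exists_eq_add_of_le' hn
  rw [List.ofFn_succ, lie_lieWord_cons_ofFn_eq_sum_shuffleWord, ← powerset_univ, sum_powerset,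
    card_univ, Fintype.card_fin, ← Fin.sum_univ_eq_sum_range]
  refine Fintype.sum_congr _ _ fun i => ?_
  have hs : 0 < m + 1 - i := by omega
  simp_rw [Shuffle1.lieWord_eq_shuffleWord hs]
  rw [Shuffle1.finsum_comp_betaPositions hs _
    (fun B => ((-1 : ℤ) ^ (i : ℕ)) • shuffleWord a (b 0) (fun j => b j.succ) B)]
  exact sum_congr rfl fun B hB => by rw [(mem_powersetCard.1 hB).2]
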